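/- arXiv:1707.00328 — 4 statements merged into one kernel-verified Lean document; each statement's English description precedes it below -/
import Mathlib

section
/- For all integers m, n and r, the identity ∑_{i=0}^{n} (-1)^i * C(r, i) * C(r + m - i, n - i) = C(m, n) holds, where C(a, b) denotes the integer binomial coefficient extended to negative upper arguments by C(a,b) = a(a-1)...(a-b+1)/b! for b ≥ 1, C(a,0) = 1, and C(a,b) = 0 for b < 0. -/
/-!
Reflecting the second factor, `C(r+m-i, n-i) = (-1)^(n-i) C(n-r-m-1, n-i)`, turns the sum into
`(-1)^n` times the Chu–Vandermonde convolution `C(n-m-1, n)`, and reflecting once more gives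
`C(m, n)`. The same reflection identifies `ibin` with Mathlib's `Ring.choose` on `ℤ`.
-/

noncomputable section

/-- Binomial coefficient `C(m, n)` for integer `m` and natural `n`:
`C(m,n) = m(m-1)⋯(m-n+1)/n!`. -/
def ibin (m : ℤ) (n : ℕ) : ℤ :=
  if 0 ≤ m then ((m.toNat.choose n : ℕ) : ℤ)
  else (-1) ^ n * ((((n : ℤ) - m - 1).toNat.choose n : ℕ) : ℤ)

/-- Binomial coefficient `C(m, n)` for integers `m, n`, zero when `n < 0`. -/
def ibinZ (m n : ℤ) : ℤ := if 0 ≤ n then ibin m n.toNat else 0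

namespace Ring

section

variable {R : Type*} [Ring R] [BinomialRing R]

theorem choose_eq_neg_one_pow_mul_choose_sub (r : R) (n : ℕ) :
    choose r n = (-1) ^ n * choose (n - r - 1) n := by
  have h := choose_neg (r - n + 1) n
  rw [show -(r - n + 1) = (n - r - 1 : R) by abel, show r - n + 1 + n - 1 = r by abel,
    Units.smul_def, Int.coe_negOnePow_natCast, zsmul_eq_mul] at h
  rw [h, Int.cast_pow, Int.cast_neg, Int.cast_one, ← mul_assoc, ← pow_add, ← two_mul, pow_mul]
  simp

theorem sum_range_choose_mul_choose (r s : R) (hrs : Commute r s) (n : ℕ) :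
    ∑ i ∈ Finset.range (n + 1), choose r i * choose s (n - i) = choose (r + s) n := by
  rw [add_choose_eq n hrs, Finset.Nat.sum_antidiagonal_eq_sum_range_succ_mk]

end

theorem sum_range_neg_one_pow_mul_choose_mul_choose_add_sub {R : Type*} [CommRing R]
    [BinomialRing R] (r m : R) (n : ℕ) :
    ∑ i ∈ Finset.range (n + 1), (-1) ^ i * choose r i * choose (r + m - i) (n - i) =
      choose m n := by
  have reflect : ∀ i ∈ Finset.range (n + 1), (-1) ^ i * choose r i * choose (r + m - i) (n - i) =
      (-1) ^ n * (choose r i * choose (n - r - m - 1) (n - i)) := by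
    intro i hi
    have hin : i ≤ n := Nat.lt_succ_iff.mp (Finset.mem_range.mp hi)
    rw [choose_eq_neg_one_pow_mul_choose_sub (r + m - i), Nat.cast_sub hin,
      show (n - i : R) - (r + m - i) - 1 = n - r - m - 1 by ring,
      ← Nat.add_sub_cancel' hin, pow_add, Nat.add_sub_cancel_left]
    ring
  rw [Finset.sum_congr rfl reflect, ← Finset.mul_sum,
    sum_range_choose_mul_choose _ _ (Commute.all _ _),
    show r + (n - r - m - 1) = (n - m - 1 : R) by ring, choose_eq_neg_one_pow_mul_choose_sub m]

end Ring

theorem ibin_eq_choose (m : ℤ) (n : ℕ) : ibin m n = Ring.choose m n := by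
  unfold ibin
  split_ifs with hm
  · rw [← Ring.choose_natCast, Int.toNat_of_nonneg hm]
  · rw [← Ring.choose_natCast, Int.toNat_of_nonneg (by omega),
      ← Ring.choose_eq_neg_one_pow_mul_choose_sub]

theorem ibinZ_natCast (m : ℤ) (n : ℕ) : ibinZ m n = Ring.choose m n := by
  rw [ibinZ, if_pos n.cast_nonneg, Int.toNat_natCast, ibin_eq_choose]

/-- Appendix identity (bi4): for all integers `m, n, r`,
`∑_{i=0}^{n} (-1)^i C(r,i) C(r+m-i, n-i) = C(m,n)`. -/
theorem binom_alternating_sum_identity (m n r : ℤ) :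
    (∑ i ∈ Finset.range ((n + 1).toNat),
        (-1) ^ i * ibinZ r (i : ℤ) * ibinZ (r + m - (i : ℤ)) (n - (i : ℤ))) = ibinZ m n := by
  rcases lt_or_ge n 0 with hn | hn
  · rw [show (n + 1).toNat = 0 by omega, Finset.sum_range_zero, ibinZ, if_neg hn.not_ge]
  obtain ⟨N, rfl⟩ := Int.eq_ofNat_of_zero_le hn
  rw [show ((N : ℤ) + 1).toNat = N + 1 by omega, ibinZ_natCast,
    ← Ring.sum_range_neg_one_pow_mul_choose_mul_choose_add_sub r m N]
  refine Finset.sum_congr rfl fun i hi => ?_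
  rw [← Nat.cast_sub (Nat.lt_succ_iff.mp (Finset.mem_range.mp hi)), ibinZ_natCast, ibinZ_natCast]
end
end

section
/- For every integer k ≥ 0, the greatest common divisor of the set of integers {C(k + i, i) : i ≥ 1} is 1, where C denotes the binomial coefficient. -/
/-!
A prime `p` dividing every `C(k + i, i)` would divide `C(k + p ^ m, p ^ m)` for `p ^ m > k`. By
Lucas's theorem this coefficient is `≡ C(1, 1) = 1 (mod p)`, since the lowest `m` base-`p` digits
of `p ^ m` are all zero.
-/

open Nat Finset

namespace Choose

theorem choose_pow_mul_add_modEq_choose {p m a b k : ℕ} [hp : Fact p.Prime] (hk : k < p ^ m) :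
    choose (p ^ m * a + k) (p ^ m * b) ≡ choose a b [ZMOD p] := by
  have hpm : 0 < p ^ m := Nat.pow_pos hp.out.pos
  have low_digit_eq_zero : ∀ i ∈ range m, p ^ m * b / p ^ i % p = 0 := fun i hi ↦ by
    rw [mem_range] at hi
    rw [mul_comm, Nat.mul_div_assoc _ (pow_dvd_pow p hi.le), Nat.pow_div hi.le hp.out.pos]
    exact Nat.mod_eq_zero_of_dvd <| Dvd.dvd.mul_left (dvd_pow_self p (Nat.sub_ne_zero_of_lt hi)) _
  refine (choose_modEq_choose_mul_prod_range_choose m).trans ?_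
  rw [Nat.mul_add_div hpm, Nat.div_eq_of_lt hk, add_zero, Nat.mul_div_cancel_left _ hpm,
    prod_congr rfl fun i hi ↦ by rw [low_digit_eq_zero i hi, choose_zero_right]]
  simp

end Choose

theorem Nat.Prime.not_dvd_choose_add_pow {p m k : ℕ} (hp : p.Prime) (hk : k < p ^ m) :
    ¬ p ∣ (k + p ^ m).choose (p ^ m) := by
  have := Fact.mk hp
  have hmod := Choose.choose_pow_mul_add_modEq_choose (a := 1) (b := 1) hk
  rw [mul_one, choose_self, add_comm, cast_one, ← cast_one, Int.natCast_modEq_iff] at hmod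
  rw [hmod.dvd_iff dvd_rfl]
  exact hp.not_dvd_one

/-- For every `k ≥ 0`, the gcd of `{C(k+i, i) : i ≥ 1}` is `1`: any common
divisor of all `C(k+i,i)` with `i ≥ 1` equals `1`. -/
theorem gcd_choose_shift_eq_one (k d : ℕ)
    (h : ∀ i : ℕ, 1 ≤ i → d ∣ (k + i).choose i) : d = 1 := by
  refine Nat.eq_one_iff_not_exists_prime_dvd.mpr fun p hp hpd ↦ ?_
  obtain ⟨m, hm⟩ : ∃ m, k < p ^ m := ⟨k, Nat.lt_pow_self hp.one_lt⟩
  exact hp.not_dvd_choose_add_pow hm (hpd.trans (h _ (Nat.one_le_pow _ _ hp.pos)))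
end

section
/- Let V be a vertex ring and define D_m ∈ End(V) for m ≥ 0 by D_m(u) := u(-m-1)𝟙. Then D_0 = Id_V, the sequence (D_0, D_1, D_2, ...) is iterative, i.e., D_i ∘ D_j = C(i+j, i) · D_{i+j} for all i, j ≥ 0, and it is a Hasse-Schmidt derivation: D_m(u(n)v) = ∑_{i+j=m} (D_i u)(n)(D_j v) for all u, v ∈ V, n ∈ ℤ, m ≥ 0. -/
noncomputable section

/-- A vertex ring structure on an additive abelian group `V`: biadditive
products `mul n u v = u(n)v` for all `n : ℤ`, a vacuum element `one = 𝟙`,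
satisfying truncation, the vacuum axioms, and the Jacobi identity. -/
structure VertexRing (V : Type*) [AddCommGroup V] where
  mul : ℤ → V → V → V
  one : V
  add_left : ∀ (n : ℤ) (u u' v : V), mul n (u + u') v = mul n u v + mul n u' v
  add_right : ∀ (n : ℤ) (u v v' : V), mul n u (v + v') = mul n u v + mul n u v'
  trunc : ∀ u v : V, ∃ n₀ : ℤ, 0 ≤ n₀ ∧ ∀ n : ℤ, n₀ ≤ n → mul n u v = 0
  vac_create : ∀ u : V, mul (-1) u one = u
  vac_ann : ∀ (u : V) (n : ℤ), 0 ≤ n → mul n u one = 0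
  jacobi : ∀ (r s t : ℤ) (u v w : V),
      (∑ᶠ i : ℕ, ibin r i • mul (r + s - (i : ℤ)) (mul (t + (i : ℤ)) u v) w) =
      (∑ᶠ i : ℕ, ((-1) ^ i * ibin t i) •
        (mul (r + t - (i : ℤ)) u (mul (s + (i : ℤ)) v w)
          - (((-1 : ℤˣ) ^ t : ℤˣ) : ℤ) • mul (s + t - (i : ℤ)) v (mul (r + (i : ℤ)) u w)))

/-- The canonical Hasse–Schmidt derivation of a vertex ring: `D m u = u(-m-1)𝟙`. -/
def VertexRing.D {V : Type*} [AddCommGroup V] (R : VertexRing V) (m : ℕ) (u : V) : V :=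
  R.mul (-(m : ℤ) - 1) u R.one

/-- The center of a vertex ring: states whose vertex operator is the constant
`u(-1)`, i.e. `u(n) = 0` for all `n ≠ -1`. -/
def VertexRing.center {V : Type*} [AddCommGroup V] (R : VertexRing V) : Set V :=
  {u | ∀ n : ℤ, n ≠ -1 → ∀ v : V, R.mul n u v = 0}


/-!
Everything comes from two specialisations of the Jacobi identity: `r = 0` gives the
associativity formula for `(u(t)v)(s)w`, and `(r, s, w) = (-1, 0, 𝟙)` gives skew symmetry
`∑ᵢ (-1)ⁱ Dᵢ(u(t+i)v) = -(-1)ᵗ v(t)u`. Skew symmetry applied to `𝟙` yields `D_m 𝟙 = 0` for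
`m > 0` (by strong induction); associativity with `w = 𝟙` expands `D_m(u(t)v)`, and with
`v = 𝟙` this gives iterativity. Skew symmetry then shows `𝟙(n) = δ_{n,-1}`, which turns
associativity with `v = 𝟙` into `(D_j u)(s) = (-1)^j C(s, j) u(s-j)`; substituting this into
the expansion of `D_m(u(n)v)` gives the Leibniz rule.
-/

open Finset

lemma finsum_eq_sum_range_of_eq_zero {M : Type*} [AddCommMonoid M] {f : ℕ → M} {n : ℕ}
    (hf : ∀ i, n ≤ i → f i = 0) : ∑ᶠ i, f i = ∑ i ∈ range n, f i :=
  finsum_eq_finsetSum_of_support_subset f fun i hi => by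
    simpa using not_le.mp (mt (hf i) hi)

lemma ibin_zero_right (m : ℤ) : ibin m 0 = 1 := by
  unfold ibin; split <;> simp

lemma ibin_zero_left {i : ℕ} (hi : i ≠ 0) : ibin 0 i = 0 := by
  simp [ibin, Nat.choose_eq_zero_of_lt (Nat.pos_of_ne_zero hi)]

lemma ibin_natCast (k j : ℕ) : ibin k j = k.choose j := by
  simp [ibin]

lemma ibin_neg_natCast_sub_one (k j : ℕ) :
    ibin (-(k : ℤ) - 1) j = (-1) ^ j * (j + k).choose j := by
  rw [ibin, if_neg (by omega), show ((j : ℤ) - (-(k : ℤ) - 1) - 1).toNat = j + k by omega]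

lemma ibin_neg_one (j : ℕ) : ibin (-1) j = (-1) ^ j := by
  simpa using ibin_neg_natCast_sub_one 0 j

lemma neg_one_pow_mul_ibin_neg_natCast_sub_one (k j : ℕ) :
    (-1) ^ j * ibin (-(k : ℤ) - 1) j = (j + k).choose j := by
  rw [ibin_neg_natCast_sub_one, ← mul_assoc, ← mul_pow]
  simp

lemma units_neg_one_zpow_neg_natCast_sub_one (m : ℕ) :
    (((-1 : ℤˣ) ^ (-(m : ℤ) - 1) : ℤˣ) : ℤ) = (-1) ^ (m + 1) := by
  rw [show -(m : ℤ) - 1 = -((m + 1 : ℕ) : ℤ) by push_cast; ring, zpow_neg, zpow_natCast,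
    Int.units_inv_eq_self]
  simp

namespace VertexRing

variable {V : Type*} [AddCommGroup V] (R : VertexRing V)

lemma mul_zero (n : ℤ) (u : V) : R.mul n u 0 = 0 := by
  simpa using R.add_right n u 0 0

lemma zero_mul (n : ℤ) (v : V) : R.mul n 0 v = 0 := by
  simpa using R.add_left n 0 0 v

lemma mul_vacuum_eq_D (k : ℕ) (v : V) : R.mul (-(k : ℤ) - 1) v R.one = R.D k v := rfl

lemma D_zero (u : V) : R.D 0 u = u := by
  simpa [D] using R.vac_create u

lemma D_map_zero (m : ℕ) : R.D m 0 = 0 :=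
  R.zero_mul _ _

lemma mul_mul_eq_finsum (s t : ℤ) (u v w : V) :
    R.mul s (R.mul t u v) w = ∑ᶠ i : ℕ, ((-1) ^ i * ibin t i) •
      (R.mul (t - i) u (R.mul (s + i) v w)
        - (((-1 : ℤˣ) ^ t : ℤˣ) : ℤ) • R.mul (s + t - i) v (R.mul i u w)) := by
  have h := R.jacobi 0 s t u v w
  rw [finsum_eq_single _ 0 fun i hi => by rw [ibin_zero_left hi, zero_smul]] at h
  simpa [ibin_zero_right] using h

lemma D_mul (m : ℕ) (t : ℤ) (u v : V) :
    R.D m (R.mul t u v)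
      = ∑ i ∈ range (m + 1), ((-1) ^ i * ibin t i) • R.mul (t - i) u (R.D (m - i) v) := by
  have hu (i : ℕ) : R.mul i u R.one = 0 := R.vac_ann u i (Nat.cast_nonneg i)
  rw [D, mul_mul_eq_finsum]
  simp only [hu, R.mul_zero, smul_zero, sub_zero]
  rw [finsum_eq_sum_range_of_eq_zero (n := m + 1) fun i hi => by
    rw [R.vac_ann v _ (by omega), R.mul_zero, smul_zero]]
  refine sum_congr rfl fun i hi => ?_
  rw [show -(m : ℤ) - 1 + i = -((m - i : ℕ) : ℤ) - 1 by have := mem_range.mp hi; omega,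
    mul_vacuum_eq_D]

lemma skew_symmetry (t : ℤ) (u v : V) :
    ∑ᶠ i : ℕ, (-1 : ℤ) ^ i • R.D i (R.mul (t + i) u v)
      = -((((-1 : ℤˣ) ^ t : ℤˣ) : ℤ) • R.mul t v u) := by
  have h := R.jacobi (-1) 0 t u v R.one
  rw [finsum_eq_single (fun i : ℕ => _ • (_ - _ • R.mul _ v (R.mul (-1 + i) u R.one))) 0
    fun i hi => by rw [R.vac_ann u _ (by omega), R.vac_ann v _ (by omega), R.mul_zero,
      R.mul_zero, smul_zero, sub_zero, smul_zero]] at h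
  simp only [Nat.cast_zero, add_zero, zero_add, sub_zero, R.vac_create, R.vac_ann v 0 le_rfl,
    R.mul_zero, zero_sub, pow_zero, one_mul, ibin_zero_right, one_smul] at h
  rw [← h]
  refine finsum_congr fun i => ?_
  rw [ibin_neg_one, show -1 - (i : ℤ) = -(i : ℤ) - 1 by ring, mul_vacuum_eq_D]

lemma D_vacuum {m : ℕ} (hm : m ≠ 0) : R.D m R.one = 0 := by
  induction m using Nat.strong_induction_on with
  | _ m ih =>
  have h := R.skew_symmetry (-(m : ℤ) - 1) R.one R.one
  rw [finsum_eq_finsetSum_of_support_subset _ (s := {0, m}) fun i hi => ?_,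
    sum_pair (Ne.symm hm)] at h
  · rw [Nat.cast_zero, add_zero, pow_zero, one_smul, D_zero,
      show -(m : ℤ) - 1 + m = -1 by ring, R.vac_create,
      units_neg_one_zpow_neg_natCast_sub_one, pow_succ, mul_neg_one, neg_smul, neg_neg] at h
    exact add_eq_right.mp h
  · simp only [Function.mem_support, coe_insert, coe_singleton, Set.mem_insert_iff,
      Set.mem_singleton_iff] at hi ⊢
    by_contra! hne
    refine hi ?_
    rcases lt_or_gt_of_ne hne.2 with hlt | hgt
    · rw [show -(m : ℤ) - 1 + i = -((m - i : ℕ) : ℤ) - 1 by omega, mul_vacuum_eq_D,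
        ih (m - i) (by omega) (by omega), D_map_zero, smul_zero]
    · rw [R.vac_ann R.one _ (by omega), D_map_zero, smul_zero]

lemma D_D (i j : ℕ) (u : V) : R.D i (R.D j u) = (i + j).choose i • R.D (i + j) u := by
  refine (R.D_mul i _ u R.one).trans ?_
  rw [sum_range_succ, sum_eq_zero fun k hk => by
    rw [R.D_vacuum (by have := mem_range.mp hk; omega), R.mul_zero, smul_zero],
    Nat.sub_self, D_zero, neg_one_pow_mul_ibin_neg_natCast_sub_one, zero_add, ← natCast_zsmul,
    show -(j : ℤ) - 1 - i = -((i + j : ℕ) : ℤ) - 1 by push_cast; ring, mul_vacuum_eq_D]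

lemma vacuum_mul (t : ℤ) (w : V) : R.mul t R.one w = if t = -1 then w else 0 := by
  have h := R.skew_symmetry t w R.one
  rcases le_or_gt 0 t with ht | ht
  · rw [finsum_eq_zero_of_forall_eq_zero fun i => by
      rw [R.vac_ann w _ (by omega), D_map_zero, smul_zero], eq_comm, neg_eq_zero,
      ← Units.smul_def, smul_eq_zero_iff_eq] at h
    rw [h, if_neg (by omega)]
  obtain ⟨k, rfl⟩ : ∃ k : ℕ, t = -(k : ℤ) - 1 := ⟨(-t - 1).toNat, by omega⟩
  have hterm (i : ℕ) (hi : i ∈ range (k + 1)) :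
      (-1 : ℤ) ^ i • R.D i (R.mul (-(k : ℤ) - 1 + i) w R.one)
        = ((-1) ^ i * k.choose i : ℤ) • R.D k w := by
    have hik := Nat.lt_succ_iff.mp (mem_range.mp hi)
    rw [show -(k : ℤ) - 1 + i = -((k - i : ℕ) : ℤ) - 1 by omega, mul_vacuum_eq_D, D_D,
      Nat.add_sub_cancel' hik, ← natCast_zsmul, smul_smul]
  rw [finsum_eq_sum_range_of_eq_zero (n := k + 1) fun i hi => by
      rw [R.vac_ann w _ (by omega), D_map_zero, smul_zero],
    sum_congr rfl hterm, ← sum_smul, Int.alternating_sum_range_choose,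
    units_neg_one_zpow_neg_natCast_sub_one, pow_succ, mul_neg_one, neg_smul, neg_neg] at h
  rcases eq_or_ne k 0 with rfl | hk
  · simpa [D_zero] using h.symm
  · rw [if_neg hk, zero_smul, eq_comm, show ((-1 : ℤ) ^ k) = ((-1 : ℤˣ) ^ k : ℤˣ) by simp,
      ← Units.smul_def, smul_eq_zero_iff_eq] at h
    rw [h, if_neg (by omega)]

lemma mul_D (s : ℤ) (j : ℕ) (u w : V) :
    R.mul s (R.D j u) w = ((-1) ^ j * ibin s j) • R.mul (s - j) u w := by
  refine (R.mul_mul_eq_finsum s _ u R.one w).trans ?_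
  simp only [vacuum_mul]
  rcases lt_or_ge s 0 with hs | hs
  · obtain ⟨a, rfl⟩ : ∃ a : ℕ, s = -(a : ℤ) - 1 := ⟨(-s - 1).toNat, by omega⟩
    rw [finsum_eq_single _ a fun i hi => by split_ifs <;> first | omega | simp [R.mul_zero]]
    split_ifs <;> try omega
    rw [smul_zero, sub_zero, neg_one_pow_mul_ibin_neg_natCast_sub_one,
      neg_one_pow_mul_ibin_neg_natCast_sub_one, Nat.choose_symm_add, add_comm a j,
      show -(j : ℤ) - 1 - a = -(a : ℤ) - 1 - j by ring]
  obtain ⟨k, rfl⟩ : ∃ k : ℕ, s = k := ⟨s.toNat, by omega⟩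
  rcases lt_or_ge k j with hkj | hjk
  · rw [finsum_eq_zero_of_forall_eq_zero fun i => by
      split_ifs <;> first | omega | simp [R.mul_zero]]
    simp [ibin_natCast, Nat.choose_eq_zero_of_lt hkj]
  obtain ⟨i, rfl⟩ := Nat.exists_eq_add_of_le' hjk
  rw [finsum_eq_single _ i fun l hl => by split_ifs <;> first | omega | simp [R.mul_zero]]
  split_ifs <;> try omega
  rw [R.mul_zero, zero_sub, units_neg_one_zpow_neg_natCast_sub_one,
    neg_one_pow_mul_ibin_neg_natCast_sub_one, ibin_natCast, smul_neg, smul_smul, ← neg_smul,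
    show ((i + j : ℕ) : ℤ) - j = i by push_cast; ring, Nat.choose_symm_add]
  congr 1
  ring

end VertexRing

/-- The canonical operators `D_m u = u(-m-1)𝟙` form an iterative Hasse–Schmidt
derivation of the vertex ring: `D_0 = Id`, `D_i ∘ D_j = C(i+j, i) D_{i+j}`, and
`D_m(u(n)v) = ∑_{i+j=m} (D_i u)(n)(D_j v)`. -/
theorem canonical_HS_derivation {V : Type*} [AddCommGroup V] (R : VertexRing V) :
    (∀ u : V, R.D 0 u = u) ∧
    (∀ (i j : ℕ) (u : V), R.D i (R.D j u) = (i + j).choose i • R.D (i + j) u) ∧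
    (∀ (m : ℕ) (n : ℤ) (u v : V),
      R.D m (R.mul n u v)
        = ∑ i ∈ Finset.range (m + 1), R.mul n (R.D i u) (R.D (m - i) v)) := by
  refine ⟨R.D_zero, R.D_D, fun m n u v => ?_⟩
  simp only [R.D_mul, R.mul_D]
end
end

section
/- Let A be a commutative unital ring equipped with an iterative Hasse-Schmidt derivation (Id_A, D_1, D_2, ...). Define products u(n)v := D_{-n-1}(u)·v for n < 0 and u(n)v := 0 for n ≥ 0. Then A with these products and vacuum element 1 is a vertex ring: the truncation condition, vacuum axioms, and the Jacobi identity all hold. -/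
noncomputable section

/-! Because `u(n) = 0` for `n ≥ 0`, once `D_m(D_j(u) v)` is expanded by the Hasse–Schmidt rule
and `D_i D_j = C(i+j, i) D_{i+j}`, every term on either side of the Jacobi identity for `u, v, w` at
`(r, s, t)` is an integer multiple of some `D_α(u) D_{N-α}(v) w`, where `N = -(r+s+t) - 2`.
Comparing coefficients, the left side gives `C(r+α, -t-1)` by Chu–Vandermonde, the right side
`(-1)^k C(t, k) - (-1)^t (-1)^(t-k) C(t, t-k)` with `k = α+r+t+1`; these agree by the symmetry of
`C(t, ·)` when `t ≥ 0` and by upper negation when `t < 0`. -/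

lemma ibin_of_nonneg {m : ℤ} (h : 0 ≤ m) (k : ℕ) : ibin m k = (m.toNat.choose k : ℤ) :=
  if_pos h

lemma ibin_of_neg {m : ℤ} (h : m < 0) (k : ℕ) :
    ibin m k = (-1) ^ k * ((((k : ℤ) - m - 1).toNat.choose k : ℕ) : ℤ) :=
  if_neg (by omega)

lemma ibin_eq_ringChoose (m : ℤ) (k : ℕ) : ibin m k = Ring.choose m k := by
  unfold ibin
  split_ifs with hm
  · rw [← Ring.choose_natCast, Int.toNat_of_nonneg hm]
  · have hpos : -m + k - 1 = (((k : ℤ) - m - 1).toNat : ℤ) := by omega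
    rw [← neg_neg m, Ring.choose_neg, hpos, Ring.choose_natCast, Units.smul_def,
      Int.coe_negOnePow_natCast, smul_eq_mul, neg_neg]

lemma ibinZ_add (x y k : ℤ) :
    ibinZ (x + y) k = ∑ i ∈ Finset.range (k + 1).toNat, ibin x i * ibinZ y (k - i) := by
  rcases lt_or_ge k 0 with hk | hk
  · rw [ibinZ, if_neg hk.not_ge, show (k + 1).toNat = 0 by omega, Finset.sum_range_zero]
  · obtain ⟨a, rfl⟩ := Int.eq_ofNat_of_zero_le hk
    rw [ibinZ, if_pos hk, Int.toNat_natCast, ibin_eq_ringChoose,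
      Ring.add_choose_eq a (Commute.all x y), Finset.Nat.sum_antidiagonal_eq_sum_range_succ_mk,
      show ((a : ℤ) + 1).toNat = a + 1 by omega]
    refine Finset.sum_congr rfl fun i hi => ?_
    have hia : i ≤ a := Nat.lt_succ_iff.mp (Finset.mem_range.mp hi)
    rw [ibinZ, if_pos (by omega), show ((a : ℤ) - i).toNat = a - i by omega,
      ibin_eq_ringChoose, ibin_eq_ringChoose]

/-- The coefficient of `x^j` in `(1 - x)^t`. -/
def altBinom (t j : ℤ) : ℤ := if 0 ≤ j then (-1) ^ j.toNat * ibin t j.toNat else 0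

lemma altBinom_natCast (t : ℤ) (i : ℕ) : altBinom t i = (-1) ^ i * ibin t i := by
  rw [altBinom, if_pos (Int.natCast_nonneg i), Int.toNat_natCast]

lemma altBinom_of_neg (t : ℤ) {j : ℤ} (hj : j < 0) : altBinom t j = 0 := if_neg hj.not_ge

lemma altBinom_eq_negOnePow_mul_altBinom_sub {t : ℤ} (ht : 0 ≤ t) (k : ℤ) :
    altBinom t k = t.negOnePow * altBinom t (t - k) := by
  obtain ⟨n, rfl⟩ := Int.eq_ofNat_of_zero_le ht
  rcases lt_or_ge k 0 with hk | hk
  · rw [altBinom_of_neg _ hk, altBinom, if_pos (by omega), ibin_of_nonneg ht,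
      Nat.choose_eq_zero_of_lt (by omega)]
    simp
  rcases lt_or_ge (n : ℤ) k with hnk | hkn
  · rw [altBinom_of_neg _ (by omega : (n : ℤ) - k < 0), altBinom, if_pos hk, ibin_of_nonneg ht,
      Nat.choose_eq_zero_of_lt (by omega)]
    simp
  · obtain ⟨i, rfl⟩ := Int.eq_ofNat_of_zero_le hk
    obtain ⟨l, rfl⟩ : ∃ l, n = i + l := ⟨n - i, by omega⟩
    rw [altBinom_natCast, show ((i + l : ℕ) : ℤ) - i = (l : ℤ) by push_cast; ring,
      altBinom_natCast, Int.coe_negOnePow_natCast, ibin_of_nonneg ht, ibin_of_nonneg ht,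
      Int.toNat_natCast, Nat.choose_symm_add, pow_add]
    have hsq : ((-1 : ℤ) ^ l) * (-1) ^ l = 1 := by
      rw [← pow_add]
      exact Even.neg_one_pow ⟨l, rfl⟩
    linear_combination (-(-1 : ℤ) ^ i * ((i + l).choose l : ℤ)) * hsq

lemma altBinom_neg_sub_one (a : ℕ) (k : ℤ) :
    altBinom (-a - 1) k = if 0 ≤ k then (((k + a).toNat.choose a : ℕ) : ℤ) else 0 := by
  rw [altBinom]
  split_ifs with hk
  · obtain ⟨i, rfl⟩ := Int.eq_ofNat_of_zero_le hk
    rw [Int.toNat_natCast, ibin_of_neg (by omega),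
      show ((i : ℤ) - (-a - 1) - 1).toNat = i + a by omega,
      show ((i : ℤ) + a).toNat = i + a by omega, Nat.choose_symm_add, ← mul_assoc, ← pow_add,
      Even.neg_one_pow ⟨i, rfl⟩, one_mul]
  · rfl

/-- The difference of the expansions of `(z - w)^t` in `|z| > |w|` and in `|w| > |z|`, read off
coefficientwise. -/
lemma ibinZ_eq_altBinom_sub (m t : ℤ) :
    ibinZ m (-t - 1) = altBinom t (m + t + 1) - t.negOnePow * altBinom t (-m - 1) := by
  rcases le_or_gt 0 t with ht | ht
  · rw [ibinZ, if_neg (by omega), altBinom_eq_negOnePow_mul_altBinom_sub ht (m + t + 1),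
      show t - (m + t + 1) = -m - 1 by ring, sub_self]
  obtain ⟨a, rfl⟩ : ∃ a : ℕ, t = -a - 1 := ⟨(-t - 1).toNat, by omega⟩
  have hsign : (((-a - 1 : ℤ).negOnePow : ℤˣ) : ℤ) = -(-1) ^ a := by
    rw [Int.negOnePow_sub, Int.negOnePow_neg, Int.negOnePow_one, mul_neg, mul_one, Units.val_neg,
      Int.coe_negOnePow_natCast]
  rw [show -(-(a : ℤ) - 1) - 1 = a by ring, ibinZ, if_pos (Int.natCast_nonneg a),
    Int.toNat_natCast, altBinom_neg_sub_one, altBinom_neg_sub_one, hsign]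
  rcases le_or_gt (a : ℤ) m with ham | ham
  · rw [ibin_of_nonneg (by omega), if_pos (by omega), if_neg (by omega),
      show (m + (-a - 1) + 1 + a).toNat = m.toNat by omega]
    ring
  rcases le_or_gt 0 m with hm | hm
  · rw [ibin_of_nonneg hm, if_neg (by omega), if_neg (by omega),
      Nat.choose_eq_zero_of_lt (by omega)]
    ring
  · rw [ibin_of_neg hm, if_neg (by omega), if_pos (by omega),
      show ((a : ℤ) - m - 1).toNat = (-m - 1 + a).toNat by omega]
    ring

section Reindexing

variable {M : Type*}

lemma finsum_natCast_eq_finsum [AddCommMonoid M] {f : ℤ → M} (hf : ∀ j < 0, f j = 0) :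
    ∑ᶠ i : ℕ, f i = ∑ᶠ j : ℤ, f j := by
  rw [← finsum_mem_range Nat.cast_injective]
  refine (finsum_mem_inter_support_eq' f _ Set.univ fun j hj =>
    ⟨fun _ => trivial, fun _ => ?_⟩).trans (finsum_mem_univ f)
  have : 0 ≤ j := not_lt.mp fun h => hj (hf j h)
  exact ⟨j.toNat, Int.toNat_of_nonneg this⟩

lemma finsum_eq_sum_range_of_support_subset [AddCommMonoid M] {f : ℤ → M} {n : ℕ}
    (hf : Function.support f ⊆ Set.Ico 0 (n : ℤ)) :
    ∑ᶠ j : ℤ, f j = ∑ i ∈ Finset.range n, f i := by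
  rw [← finsum_natCast_eq_finsum (f := f) fun j hj =>
    Function.notMem_support.mp fun h => (hf h).1.not_gt hj]
  refine finsum_eq_sum_of_support_subset _ fun i hi => ?_
  simpa using (hf hi).2

variable [AddCommGroup M]

lemma finsum_smul_comp_equiv {W : ℤ → M} {n : ℕ}
    (hW : Function.support W ⊆ Set.Ico 0 (n : ℤ)) (c : ℤ → ℤ) (φ : ℤ ≃ ℤ) :
    ∑ᶠ j : ℤ, c j • W (φ j) = ∑ i ∈ Finset.range n, c (φ.symm i) • W i := by
  rw [← finsum_comp_equiv φ.symm]
  simp only [Equiv.apply_symm_apply]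
  exact finsum_eq_sum_range_of_support_subset
    ((Function.support_smul_subset_right (fun i => c (φ.symm i)) W).trans hW)

lemma finsum_natCast_smul_sub_eq_sum_range {W : ℤ → M} {n : ℕ}
    (hW : Function.support W ⊆ Set.Ico 0 (n : ℤ)) {c : ℤ → ℤ} (hc : ∀ j < 0, c j = 0)
    (φ ψ : ℤ ≃ ℤ) (ε : ℤ) :
    ∑ᶠ i : ℕ, c i • (W (φ i) - ε • W (ψ i)) =
      ∑ i ∈ Finset.range n, (c (φ.symm i) - ε * c (ψ.symm i)) • W i := by
  have hfin : ∀ χ : ℤ ≃ ℤ, (Function.support fun j => c j • W (χ j)).Finite := fun χ =>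
    (((Set.finite_Ico _ _).subset hW).preimage χ.injective.injOn).subset
      (Function.support_smul_subset_right c (W ∘ χ))
  rw [finsum_natCast_eq_finsum (f := fun j => c j • (W (φ j) - ε • W (ψ j)))
    fun j hj => by rw [hc j hj, zero_smul]]
  simp only [smul_sub, smul_comm (c _) ε]
  rw [finsum_sub_distrib (f := fun j => c j • W (φ j)) (g := fun j => ε • c j • W (ψ j))
      (hfin φ) ((hfin ψ).subset
        (Function.support_const_smul_subset ε fun j => c j • W (ψ j))),
    ← smul_finsum' ε (hfin ψ), finsum_smul_comp_equiv hW, finsum_smul_comp_equiv hW,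
    Finset.smul_sum, ← Finset.sum_sub_distrib]
  simp only [sub_smul, mul_smul]

end Reindexing

section HasseSchmidt

variable {A : Type*} [CommRing A] (D : ℕ → A → A)

def hsMul (n : ℤ) (u v : A) : A := if n < 0 then D (-n - 1).toNat u * v else 0

def hsMonomial (N : ℤ) (u v w : A) (j : ℤ) : A :=
  if 0 ≤ j ∧ j ≤ N then D j.toNat u * D (N - j).toNat v * w else 0

variable {D}

lemma hsMul_of_neg {n : ℤ} (hn : n < 0) (u v : A) : hsMul D n u v = D (-n - 1).toNat u * v :=
  if_pos hn

lemma hsMul_of_nonneg {n : ℤ} (hn : 0 ≤ n) (u v : A) : hsMul D n u v = 0 := if_neg hn.not_gt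

lemma hsMul_zero_left (hD0 : ∀ m, D m 0 = 0) (n : ℤ) (v : A) : hsMul D n 0 v = 0 := by
  unfold hsMul
  split_ifs <;> simp [hD0]

lemma support_hsMonomial_subset (N : ℤ) (u v w : A) :
    Function.support (hsMonomial D N u v w) ⊆ Set.Ico 0 ((N + 1).toNat : ℤ) := fun j hj => by
  by_contra hout
  exact hj (if_neg (by simp only [Set.mem_Ico] at hout; omega))

lemma hsMonomial_swap (N : ℤ) (u v w : A) (j : ℤ) :
    hsMonomial D N v u w j = hsMonomial D N u v w (N - j) := by
  unfold hsMonomial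
  rw [sub_sub_cancel]
  split_ifs <;> first | omega | ring

lemma hsMul_hsMul_eq_hsMonomial {N p q : ℤ} (h : p + q = -N - 2) (u v w : A) :
    hsMul D p u (hsMul D q v w) = hsMonomial D N u v w (-p - 1) := by
  unfold hsMul hsMonomial
  by_cases hp : p < 0
  · by_cases hq : q < 0
    · rw [if_pos hq, if_pos hp, if_pos (by omega),
        show (N - (-p - 1)).toNat = (-q - 1).toNat by omega, mul_assoc]
    · rw [if_neg hq, if_pos hp, if_neg (by omega), mul_zero]
  · rw [if_neg hp, if_neg (by omega)]

lemma D_mul_eq_sum (hHS : ∀ (m : ℕ) (u v : A),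
      D m (u * v) = ∑ i ∈ Finset.range (m + 1), D i u * D (m - i) v)
    (hiter : ∀ (i j : ℕ) (u : A), D i (D j u) = (i + j).choose i • D (i + j) u)
    (j m : ℕ) (u v : A) :
    D m (D j u * v) =
      ∑ α ∈ Finset.range (j + m + 1), α.choose j • (D α u * D (j + m - α) v) := by
  have hlow : ∑ α ∈ Finset.range j, α.choose j • (D α u * D (j + m - α) v) = 0 :=
    Finset.sum_eq_zero fun α hα => by
      rw [Nat.choose_eq_zero_of_lt (Finset.mem_range.mp hα), zero_smul]
  rw [hHS, add_assoc, Finset.sum_range_add _ j (m + 1), hlow, zero_add]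
  refine Finset.sum_congr rfl fun p _ => ?_
  rw [hiter, smul_mul_assoc, add_comm p j, Nat.choose_symm_add, Nat.add_sub_add_left]

lemma hsMul_hsMul_left_eq_sum (hD0 : ∀ m, D m 0 = 0)
    (hHS : ∀ (m : ℕ) (u v : A),
      D m (u * v) = ∑ i ∈ Finset.range (m + 1), D i u * D (m - i) v)
    (hiter : ∀ (i j : ℕ) (u : A), D i (D j u) = (i + j).choose i • D (i + j) u)
    {N p q : ℤ} (h : p + q = -N - 2) (u v w : A) :
    hsMul D p (hsMul D q u v) w =
      ∑ α ∈ Finset.range (N + 1).toNat, ibinZ α (-q - 1) • hsMonomial D N u v w α := by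
  rcases le_or_gt 0 q with hq | hq
  · rw [hsMul_of_nonneg hq, hsMul_zero_left hD0]
    exact (Finset.sum_eq_zero fun α _ => by rw [ibinZ, if_neg (by omega), zero_smul]).symm
  rcases le_or_gt 0 p with hp | hp
  · rw [hsMul_of_nonneg hp]
    refine (Finset.sum_eq_zero fun α hα => ?_).symm
    rw [Finset.mem_range] at hα
    rw [ibinZ, if_pos (by omega), ibin_of_nonneg (Nat.cast_nonneg α), Int.toNat_natCast,
      Nat.choose_eq_zero_of_lt (by omega), Nat.cast_zero, zero_smul]
  obtain ⟨j, hj⟩ : ∃ j : ℕ, (-q - 1).toNat = j := ⟨_, rfl⟩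
  obtain ⟨m, hm⟩ : ∃ m : ℕ, (-p - 1).toNat = m := ⟨_, rfl⟩
  rw [hsMul_of_neg hq, hsMul_of_neg hp, hj, hm, D_mul_eq_sum hHS hiter, Finset.sum_mul,
    show (N + 1).toNat = j + m + 1 by omega]
  refine Finset.sum_congr rfl fun α hα => ?_
  rw [Finset.mem_range] at hα
  rw [ibinZ, if_pos (by omega), hj, ibin_of_nonneg (Nat.cast_nonneg α), Int.toNat_natCast,
    hsMonomial, if_pos (by omega), Int.toNat_natCast, show (N - α).toNat = j + m - α by omega,
    natCast_zsmul, smul_mul_assoc]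

end HasseSchmidt

section Jacobi

variable {A : Type*} [CommRing A] {D : ℕ → A → A}

lemma finsum_ibin_smul_hsMul_hsMul (hD0 : ∀ m, D m 0 = 0)
    (hHS : ∀ (m : ℕ) (u v : A),
      D m (u * v) = ∑ i ∈ Finset.range (m + 1), D i u * D (m - i) v)
    (hiter : ∀ (i j : ℕ) (u : A), D i (D j u) = (i + j).choose i • D (i + j) u)
    {N r s t : ℤ} (h : r + s + t = -N - 2) (u v w : A) :
    ∑ᶠ i : ℕ, ibin r i • hsMul D (r + s - i) (hsMul D (t + i) u v) w =
      ∑ α ∈ Finset.range (N + 1).toNat,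
        ibinZ (r + α) (-t - 1) • hsMonomial D N u v w α := by
  have hterm (i : ℕ) : ibin r i • hsMul D (r + s - i) (hsMul D (t + i) u v) w =
      ∑ α ∈ Finset.range (N + 1).toNat,
        (ibin r i * ibinZ α (-t - 1 - i)) • hsMonomial D N u v w α := by
    rw [hsMul_hsMul_left_eq_sum hD0 hHS hiter (N := N) (by omega), Finset.smul_sum]
    simp only [smul_smul, show -(t + (i : ℤ)) - 1 = -t - 1 - i by ring]
  have hsupp : Function.support (fun i : ℕ => ∑ α ∈ Finset.range (N + 1).toNat,
      (ibin r i * ibinZ α (-t - 1 - i)) • hsMonomial D N u v w α) ⊆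
        Finset.range (-t).toNat := fun i hi => by
    by_contra hout
    refine hi (Finset.sum_eq_zero fun α _ => ?_)
    rw [Finset.coe_range, Set.mem_Iio] at hout
    rw [ibinZ, if_neg (by omega), mul_zero, zero_smul]
  rw [finsum_congr hterm, finsum_eq_sum_of_support_subset _ hsupp, Finset.sum_comm]
  refine Finset.sum_congr rfl fun α _ => ?_
  rw [← Finset.sum_smul, ibinZ_add, show -t - 1 + 1 = -t by ring]

lemma finsum_altBinom_smul_hsMul_hsMul {N r s t : ℤ} (h : r + s + t = -N - 2) (u v w : A) :
    ∑ᶠ i : ℕ, ((-1) ^ i * ibin t i) •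
      (hsMul D (r + t - i) u (hsMul D (s + i) v w)
        - (t.negOnePow : ℤ) • hsMul D (s + t - i) v (hsMul D (r + i) u w)) =
      ∑ α ∈ Finset.range (N + 1).toNat,
        (altBinom t (α + (r + t + 1)) - t.negOnePow * altBinom t (-r - 1 - α)) •
          hsMonomial D N u v w α := by
  have hterm (i : ℕ) : ((-1) ^ i * ibin t i) •
      (hsMul D (r + t - i) u (hsMul D (s + i) v w)
        - (t.negOnePow : ℤ) • hsMul D (s + t - i) v (hsMul D (r + i) u w)) =
      altBinom t i • (hsMonomial D N u v w (Equiv.subRight (r + t + 1) i)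
        - (t.negOnePow : ℤ) • hsMonomial D N u v w (Equiv.subLeft (-r - 1) i)) := by
    rw [altBinom_natCast, hsMul_hsMul_eq_hsMonomial (by omega : r + t - i + (s + i) = -N - 2),
      hsMul_hsMul_eq_hsMonomial (by omega : s + t - i + (r + i) = -N - 2),
      hsMonomial_swap N u v w, Equiv.subRight_apply, Equiv.subLeft_apply,
      show -(r + t - (i : ℤ)) - 1 = i - (r + t + 1) by ring,
      show N - (-(s + t - (i : ℤ)) - 1) = -r - 1 - i by omega]
  rw [finsum_congr hterm, finsum_natCast_smul_sub_eq_sum_range (support_hsMonomial_subset N u v w)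
    fun j hj => altBinom_of_neg t hj]
  refine Finset.sum_congr rfl fun α _ => ?_
  rw [Equiv.subRight_symm_apply, Equiv.subLeft_symm_apply, neg_add_eq_sub]


theorem hsMul_jacobi (hD0 : ∀ m, D m 0 = 0)
    (hHS : ∀ (m : ℕ) (u v : A),
      D m (u * v) = ∑ i ∈ Finset.range (m + 1), D i u * D (m - i) v)
    (hiter : ∀ (i j : ℕ) (u : A), D i (D j u) = (i + j).choose i • D (i + j) u)
    (r s t : ℤ) (u v w : A) :
    ∑ᶠ i : ℕ, ibin r i • hsMul D (r + s - i) (hsMul D (t + i) u v) w =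
      ∑ᶠ i : ℕ, ((-1) ^ i * ibin t i) •
        (hsMul D (r + t - i) u (hsMul D (s + i) v w)
          - (t.negOnePow : ℤ) • hsMul D (s + t - i) v (hsMul D (r + i) u w)) := by
  obtain ⟨N, hN⟩ : ∃ N, r + s + t = -N - 2 := ⟨-(r + s + t) - 2, by ring⟩
  rw [finsum_ibin_smul_hsMul_hsMul hD0 hHS hiter hN, finsum_altBinom_smul_hsMul_hsMul hN]
  refine Finset.sum_congr rfl fun α _ => ?_
  rw [ibinZ_eq_altBinom_sub, show r + α + t + 1 = α + (r + t + 1) by ring,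
    show -(r + α) - 1 = -r - 1 - α by ring]

end Jacobi


def VertexRing.ofHasseSchmidt {A : Type*} [CommRing A] (D : ℕ → A → A)
    (hadd : ∀ (m : ℕ) (u v : A), D m (u + v) = D m u + D m v)
    (hid : ∀ u : A, D 0 u = u)
    (hHS : ∀ (m : ℕ) (u v : A),
      D m (u * v) = ∑ i ∈ Finset.range (m + 1), D i u * D (m - i) v)
    (hiter : ∀ (i j : ℕ) (u : A), D i (D j u) = (i + j).choose i • D (i + j) u) :
    VertexRing A where
  mul := hsMul D
  one := 1
  add_left n u u' v := by
    unfold hsMul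
    split_ifs <;> simp only [hadd, add_mul, add_zero]
  add_right n u v v' := by
    unfold hsMul
    split_ifs <;> simp only [mul_add, add_zero]
  trunc _ _ := ⟨0, le_rfl, fun _ hn => hsMul_of_nonneg hn _ _⟩
  vac_create u := by
    rw [hsMul_of_neg neg_one_lt_zero, neg_neg, sub_self, Int.toNat_zero, hid, mul_one]
  vac_ann _ _ hn := hsMul_of_nonneg hn _ _
  jacobi := hsMul_jacobi (fun m => (AddMonoidHom.mk' (D m) (hadd m)).map_zero) hHS hiter

/-- A commutative unital ring with an iterative Hasse–Schmidt derivation is a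
vertex ring with vacuum `1` and products `u(n)v = D_{-n-1}(u)·v` for `n < 0`,
`u(n)v = 0` for `n ≥ 0`. -/
theorem vertexRing_of_commRing_HS (A : Type*) [CommRing A] (D : ℕ → A → A)
    (hadd : ∀ (m : ℕ) (u v : A), D m (u + v) = D m u + D m v)
    (hid : ∀ u : A, D 0 u = u)
    (hHS : ∀ (m : ℕ) (u v : A),
      D m (u * v) = ∑ i ∈ Finset.range (m + 1), D i u * D (m - i) v)
    (hiter : ∀ (i j : ℕ) (u : A), D i (D j u) = (i + j).choose i • D (i + j) u) :
    ∃ R : VertexRing A, R.one = 1 ∧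
      ∀ (n : ℤ) (u v : A),
        R.mul n u v = if n < 0 then D (-n - 1).toNat u * v else 0 :=
  ⟨VertexRing.ofHasseSchmidt D hadd hid hHS hiter, rfl, fun _ _ _ => rfl⟩
end
end
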